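/- Let J : ℝ → ℝ be twice continuously differentiable, and for ε_a > 0 and ū ∈ ℝ define the extremum-seeking average vector field f_ave(ū, ε_a) := (1/(2π)) ∫₀^{2π} −(2/ε_a) J(ū + ε_a sin τ) sin τ dτ. Then for every compact set K ⊆ ℝ there exist k > 0 and ε* > 0 such that for all ε_a ∈ (0, ε*) and all ū ∈ K: |f_ave(ū, ε_a) + J′(ū)| ≤ k ε_a. In particular, on compact sets the average of the basic extremum-seeking dynamics is an O(ε_a) perturbation of the negative gradient flow of J: f_ave(ū, ε_a) ∈ −J′(ū) + k ε_a [−1, 1]. -/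

import Mathlib

open Set Filter Metric MeasureTheory Topology
open scoped RealInnerProductSpace

noncomputable section

namespace HS

/-- Euclidean space `ℝ^n`. -/
abbrev E (n : ℕ) : Type := EuclideanSpace ℝ (Fin n)

/-- Data of a hybrid system `H = (C, F, D, G)`: flows `ẋ ∈ F x` on `C`,
jumps `x⁺ ∈ G x` on `D`. -/
structure System (X : Type*) where
  C : Set X
  F : X → Set X
  D : Set X
  G : X → Set X

variable {X Y : Type*}

/-- Outer semicontinuity of a set-valued map relative to a set `K` (sequential form). -/
def OSCRel [TopologicalSpace X] [TopologicalSpace Y] (M : X → Set Y) (K : Set X) : Prop :=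
  ∀ (z : X) (s : Y) (zs : ℕ → X) (ss : ℕ → Y),
    z ∈ K → (∀ i, zs i ∈ K) → Tendsto zs atTop (𝓝 z) →
    (∀ i, ss i ∈ M (zs i)) → Tendsto ss atTop (𝓝 s) → s ∈ M z

/-- Local boundedness of a set-valued map relative to a set `K`. -/
def LocBddRel [TopologicalSpace X] [Bornology Y] (M : X → Set Y) (K : Set X) : Prop :=
  ∀ z ∈ K, ∃ U : Set X, IsOpen U ∧ z ∈ U ∧ Bornology.IsBounded (⋃ x ∈ U ∩ K, M x)

/-- The Hybrid Basic Conditions. -/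
def BasicConditions [NormedAddCommGroup X] [NormedSpace ℝ X] (H : System X) : Prop :=
  IsClosed H.C ∧ IsClosed H.D ∧
  OSCRel H.F H.C ∧ LocBddRel H.F H.C ∧
  (∀ x ∈ H.C, (H.F x).Nonempty ∧ Convex ℝ (H.F x)) ∧
  OSCRel H.G H.D ∧ LocBddRel H.G H.D ∧ (∀ x ∈ H.D, (H.G x).Nonempty)

/-- Compact hybrid time domains. -/
def IsCompactHTD (E : Set (ℝ × ℕ)) : Prop :=
  ∃ (J : ℕ) (t : ℕ → ℝ), t 0 = 0 ∧ (∀ j, j < J → t j ≤ t (j+1)) ∧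
    E = ⋃ j ∈ Finset.range J, Icc (t j) (t (j+1)) ×ˢ ({j} : Set ℕ)

/-- Hybrid time domains: unions of nondecreasing sequences of compact hybrid time domains. -/
def IsHTD (E : Set (ℝ × ℕ)) : Prop :=
  ∃ Ek : ℕ → Set (ℝ × ℕ), (∀ k, IsCompactHTD (Ek k)) ∧ Monotone Ek ∧ E = ⋃ k, Ek k

/-- A hybrid arc: a function defined on a hybrid time domain containing `(0,0)`. -/
structure Arc (X : Type*) where
  dom : Set (ℝ × ℕ)
  htd : IsHTD dom
  init : ((0:ℝ), (0:ℕ)) ∈ dom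
  val : ℝ × ℕ → X

/-- The `j`-th flow interval `I_j` of a hybrid time domain. -/
def slice (dom : Set (ℝ × ℕ)) (j : ℕ) : Set ℝ := {t | (t, j) ∈ dom}

/-- Solutions of a hybrid system: absolutely continuous (encoded via an integrable
a.e. selection of the flow map) along flows, and satisfying the jump conditions. -/
def IsSolution [NormedAddCommGroup X] [NormedSpace ℝ X] (H : System X) (x : Arc X) : Prop :=
  x.val (0,0) ∈ H.C ∪ H.D ∧
  (∀ j : ℕ, ∃ v : ℝ → X,
    (∀ᵐ t ∂(volume.restrict (slice x.dom j)),
      x.val (t, j) ∈ H.C ∧ v t ∈ H.F (x.val (t, j))) ∧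
    (∀ t ∈ slice x.dom j, ∀ t' ∈ slice x.dom j,
      IntervalIntegrable v volume t' t ∧
      x.val (t, j) - x.val (t', j) = ∫ s in t'..t, v s)) ∧
  (∀ (t : ℝ) (j : ℕ), (t, j) ∈ x.dom → (t, j+1) ∈ x.dom →
    x.val (t, j) ∈ H.D ∧ x.val (t, j+1) ∈ H.G (x.val (t, j)))

/-- Maximal solutions. -/
def IsMaximal [NormedAddCommGroup X] [NormedSpace ℝ X] (H : System X) (x : Arc X) : Prop :=
  IsSolution H x ∧ ∀ ψ : Arc X, IsSolution H ψ → x.dom ⊆ ψ.dom →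
    (∀ p ∈ x.dom, ψ.val p = x.val p) → ψ.dom ⊆ x.dom

/-- Complete solutions: unbounded hybrid time domain. -/
def Complete (x : Arc X) : Prop := ∀ m : ℝ, ∃ p ∈ x.dom, m < p.1 + (p.2 : ℝ)

/-- Bounded solutions: bounded range. -/
def BoundedArc [Bornology X] (x : Arc X) : Prop := Bornology.IsBounded (x.val '' x.dom)

/-- Class-KL functions. -/
def ClassKL (β : ℝ → ℝ → ℝ) : Prop :=
  (∀ r s, 0 ≤ r → 0 ≤ s → 0 ≤ β r s) ∧
  (∀ s, 0 ≤ s → MonotoneOn (fun r => β r s) (Ici 0)) ∧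
  (∀ r, 0 ≤ r → AntitoneOn (fun s => β r s) (Ici 0)) ∧
  (∀ s, 0 ≤ s → Tendsto (fun r => β r s) (𝓝[>] 0) (𝓝 0)) ∧
  (∀ r, 0 ≤ r → Tendsto (fun s => β r s) atTop (𝓝 0))

/-- Class-K∞ functions. -/
def ClassKInf (α : ℝ → ℝ) : Prop :=
  ContinuousOn α (Ici 0) ∧ α 0 = 0 ∧ StrictMonoOn α (Ici 0) ∧ Tendsto α atTop atTop

/-- Uniform global asymptotic stability of a set `A`. -/
def UGAS [NormedAddCommGroup X] [NormedSpace ℝ X] (H : System X) (A : Set X) : Prop :=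
  ∃ β, ClassKL β ∧ ∀ x : Arc X, IsMaximal H x → ∀ p ∈ x.dom,
    infDist (x.val p) A ≤ β (infDist (x.val (0,0)) A) (p.1 + (p.2 : ℝ))

/-- Uniform global exponential stability of a set `A`. -/
def UGES [NormedAddCommGroup X] [NormedSpace ℝ X] (H : System X) (A : Set X) : Prop :=
  ∃ c₁ c₂ : ℝ, 0 < c₁ ∧ 0 < c₂ ∧ ∀ x : Arc X, IsMaximal H x → ∀ p ∈ x.dom,
    infDist (x.val p) A ≤ c₁ * infDist (x.val (0,0)) A * Real.exp (-(c₂ * (p.1 + (p.2 : ℝ))))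

/-- The KL-plus-offset bound on all maximal solutions starting in `S`. -/
def SolBound [NormedAddCommGroup X] [NormedSpace ℝ X]
    (H : System X) (A : Set X) (β : ℝ → ℝ → ℝ) (ν : ℝ) (S : Set X) : Prop :=
  ∀ x : Arc X, IsMaximal H x → x.val (0,0) ∈ S → ∀ p ∈ x.dom,
    infDist (x.val p) A ≤ β (infDist (x.val (0,0)) A) (p.1 + (p.2 : ℝ)) + ν

/-- SGPAS as `ε → 0⁺` for a one-parameter family of hybrid systems. -/
def SGPAS1 [NormedAddCommGroup X] [NormedSpace ℝ X]
    (H : ℝ → System X) (A : Set X) : Prop :=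
  ∃ β, ClassKL β ∧ ∀ Δ ν : ℝ, 0 < ν → ν < Δ →
    ∃ e1 > (0:ℝ), ∀ ε1 ∈ Ioo (0:ℝ) e1,
      SolBound (H ε1) A β ν {z | infDist z A ≤ Δ}

/-- SGPAS as `(ε₁, ε₂, ε₃) → 0⁺` (parameters tuned sequentially). -/
def SGPAS3 [NormedAddCommGroup X] [NormedSpace ℝ X]
    (H : ℝ → ℝ → ℝ → System X) (A : Set X) : Prop :=
  ∃ β, ClassKL β ∧ ∀ Δ ν : ℝ, 0 < ν → ν < Δ →
    ∃ e1 > (0:ℝ), ∀ ε1 ∈ Ioo (0:ℝ) e1,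
    ∃ e2 > (0:ℝ), ∀ ε2 ∈ Ioo (0:ℝ) e2,
    ∃ e3 > (0:ℝ), ∀ ε3 ∈ Ioo (0:ℝ) e3,
      SolBound (H ε1 ε2 ε3) A β ν {z | infDist z A ≤ Δ}

/-- SGPAS as `(ε₁, ε₂, ε₃, ε₄) → 0⁺` (parameters tuned sequentially). -/
def SGPAS4 [NormedAddCommGroup X] [NormedSpace ℝ X]
    (H : ℝ → ℝ → ℝ → ℝ → System X) (A : Set X) : Prop :=
  ∃ β, ClassKL β ∧ ∀ Δ ν : ℝ, 0 < ν → ν < Δ →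
    ∃ e1 > (0:ℝ), ∀ ε1 ∈ Ioo (0:ℝ) e1,
    ∃ e2 > (0:ℝ), ∀ ε2 ∈ Ioo (0:ℝ) e2,
    ∃ e3 > (0:ℝ), ∀ ε3 ∈ Ioo (0:ℝ) e3,
    ∃ e4 > (0:ℝ), ∀ ε4 ∈ Ioo (0:ℝ) e4,
      SolBound (H ε1 ε2 ε3 ε4) A β ν {z | infDist z A ≤ Δ}

/-- SGPAS as `(ε₁, ..., ε₅) → 0⁺` (parameters tuned sequentially). -/
def SGPAS5 [NormedAddCommGroup X] [NormedSpace ℝ X]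
    (H : ℝ → ℝ → ℝ → ℝ → ℝ → System X) (A : Set X) : Prop :=
  ∃ β, ClassKL β ∧ ∀ Δ ν : ℝ, 0 < ν → ν < Δ →
    ∃ e1 > (0:ℝ), ∀ ε1 ∈ Ioo (0:ℝ) e1,
    ∃ e2 > (0:ℝ), ∀ ε2 ∈ Ioo (0:ℝ) e2,
    ∃ e3 > (0:ℝ), ∀ ε3 ∈ Ioo (0:ℝ) e3,
    ∃ e4 > (0:ℝ), ∀ ε4 ∈ Ioo (0:ℝ) e4,
    ∃ e5 > (0:ℝ), ∀ ε5 ∈ Ioo (0:ℝ) e5,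
      SolBound (H ε1 ε2 ε3 ε4 ε5) A β ν {z | infDist z A ≤ Δ}

/-- Global practical asymptotic stability as `(ε₁, ε₂, ε₃, ε₄) → 0⁺`:
no restriction on the initial condition. -/
def GPAS4 [NormedAddCommGroup X] [NormedSpace ℝ X]
    (H : ℝ → ℝ → ℝ → ℝ → System X) (A : Set X) : Prop :=
  ∃ β, ClassKL β ∧ ∀ ν : ℝ, 0 < ν →
    ∃ e1 > (0:ℝ), ∀ ε1 ∈ Ioo (0:ℝ) e1,
    ∃ e2 > (0:ℝ), ∀ ε2 ∈ Ioo (0:ℝ) e2,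
    ∃ e3 > (0:ℝ), ∀ ε3 ∈ Ioo (0:ℝ) e3,
    ∃ e4 > (0:ℝ), ∀ ε4 ∈ Ioo (0:ℝ) e4,
      SolBound (H ε1 ε2 ε3 ε4) A β ν univ

/-- `(τ, ε)`-closeness of two hybrid arcs. -/
def Close [PseudoMetricSpace X] (τ ε : ℝ) (x y : Arc X) : Prop :=
  (∀ (t : ℝ) (j : ℕ), (t, j) ∈ x.dom → t + (j : ℝ) ≤ τ →
    ∃ s : ℝ, 0 ≤ s ∧ (s, j) ∈ y.dom ∧ |t - s| ≤ ε ∧ dist (x.val (t, j)) (y.val (s, j)) < ε) ∧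
  (∀ (t : ℝ) (j : ℕ), (t, j) ∈ y.dom → t + (j : ℝ) ≤ τ →
    ∃ s : ℝ, 0 ≤ s ∧ (s, j) ∈ x.dom ∧ |t - s| ≤ ε ∧ dist (y.val (t, j)) (x.val (s, j)) < ε)

/-- The `ρ`-inflation of a hybrid system, with inflation profile `σ`. -/
def inflate [NormedAddCommGroup X] [NormedSpace ℝ X] (H : System X) (σ : X → ℝ) (ρ : ℝ) :
    System X where
  C := {x | (closedBall x (ρ * σ x) ∩ H.C).Nonempty}
  F := fun x => {v | ∃ w ∈ closure (convexHull ℝ (⋃ y ∈ closedBall x (ρ * σ x) ∩ H.C, H.F y)),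
      ‖v - w‖ ≤ ρ * σ x}
  D := {x | (closedBall x (ρ * σ x) ∩ H.D).Nonempty}
  G := fun x => {v | ∃ y ∈ closedBall x (ρ * σ x) ∩ H.D, ∃ g ∈ H.G y, ‖v - g‖ ≤ ρ * σ g}

/-- Extraction of the `û`-component (first `n` coordinates of `x_{u,z} ∈ ℝ^{n+r}`). -/
def uhat (n r : ℕ) (x : E (n+r)) : E n := WithLp.toLp 2 (fun i => x (Fin.castAdd r i))

/-- Extraction of the `ẑ`-component (last `r` coordinates of `x_{u,z} ∈ ℝ^{n+r}`). -/
def zhat (n r : ℕ) (x : E (n+r)) : E r := WithLp.toLp 2 (fun i => x (Fin.natAdd n i))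

/-- The matrix `𝔻` extracting the odd-indexed entries of `μ ∈ ℝ^{2n}`. -/
def Dmat (n : ℕ) (μ : E (2*n)) : E n := WithLp.toLp 2 (fun i : Fin n => μ ⟨2 * i.1, by have := i.2; omega⟩)

/-- The torus `𝕊^n ⊆ ℝ^{2n}`: product of `n` unit circles. -/
def Sph (n : ℕ) : Set (E (2*n)) :=
  {μ | ∀ i : Fin n,
    (μ ⟨2*i.1, by have := i.2; omega⟩)^2 + (μ ⟨2*i.1+1, by have := i.2; omega⟩)^2 = 1}

/-- The block-diagonal oscillator matrix `Φ(ω)` acting on `μ ∈ ℝ^{2n}`, with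
`ω_i = κ_i / ε_ω` and 2×2 blocks `ω_i R₀`, `R₀ = [[0,1],[-1,0]]`. -/
def Phi (n : ℕ) (κ : Fin n → ℚ) (εω : ℝ) (μ : E (2*n)) : E (2*n) :=
  WithLp.toLp 2 fun (j : Fin (2*n)) => if h : j.1 % 2 = 0 then
      ((κ ⟨j.1/2, by have := j.2; omega⟩ : ℝ) / εω) * μ ⟨j.1+1, by have := j.2; omega⟩
    else
      -(((κ ⟨j.1/2, by have := j.2; omega⟩ : ℝ) / εω) * μ ⟨j.1-1, by have := j.2; omega⟩)

/-- The set `A := 𝒪 × Ψ` viewed inside `ℝ^{n+r}`. -/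
def setA (n r : ℕ) (O : Set (E n)) (Ψ : Set (E r)) : Set (E (n+r)) :=
  {x | uhat n r x ∈ O ∧ zhat n r x ∈ Ψ}

/-- The average of the basic extremum-seeking dynamics over one period of the
dither: `f_ave(ū, ε_a) = (1/2π) ∫₀^{2π} −(2/ε_a) J(ū + ε_a sin τ) sin τ dτ`. -/
noncomputable def fave (J : ℝ → ℝ) (ub εa : ℝ) : ℝ :=
  (1 / (2 * Real.pi)) *
    ∫ τ in (0:ℝ)..(2 * Real.pi), -(2 / εa) * J (ub + εa * Real.sin τ) * Real.sin τ

/-- on compact sets, the average of the basic extremum-seeking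
dynamics is an `O(ε_a)` perturbation of the negative gradient flow of `J`. -/
theorem statement19
    (J : ℝ → ℝ) (hJ : ContDiff ℝ 2 J) :
    ∀ K : Set ℝ, IsCompact K →
      ∃ k > (0:ℝ), ∃ εs > (0:ℝ), ∀ εa ∈ Ioo (0:ℝ) εs, ∀ ub ∈ K,
        |fave J ub εa + deriv J ub| ≤ k * εa ∧
        fave J ub εa ∈ Icc (-deriv J ub - k * εa) (-deriv J ub + k * εa) := by
  intro K hK
  have hJ1 : ContDiff ℝ 1 (deriv J) := by
    have := contDiff_succ_iff_deriv.mp (show ContDiff ℝ (1+1) J by exact_mod_cast hJ)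
    exact this.2.2
  have hJdiff : Differentiable ℝ J := hJ.differentiable (by norm_num)
  have hdJdiff : Differentiable ℝ (deriv J) := hJ1.differentiable (by norm_num)
  have hddJc : Continuous (deriv (deriv J)) := hJ1.continuous_deriv le_rfl
  have hK1c : IsCompact (Metric.cthickening 1 K) := hK.cthickening
  obtain ⟨C, hC⟩ := hK1c.exists_bound_of_continuousOn hddJc.continuousOn
  set M : ℝ := max C 0 with hM
  have hM0 : 0 ≤ M := le_max_right _ _
  refine ⟨2*M + 1, by linarith, 1, one_pos, ?_⟩
  intro εa hεa ub hub
  obtain ⟨hεa0, hεa1⟩ := hεa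
  have hεane : εa ≠ 0 := ne_of_gt hεa0
  have hball : Metric.closedBall ub 1 ⊆ Metric.cthickening 1 K :=
    closedBall_subset_cthickening hub 1
  -- Step A
  have stepA : ∀ h : ℝ, |h| ≤ εa → |deriv J (ub + h) - deriv J ub| ≤ M * εa := by
    intro h hh
    have hmem : ub + h ∈ Metric.closedBall ub 1 := by
      simp only [Metric.mem_closedBall, Real.dist_eq, add_sub_cancel_left]
      linarith
    have h0 : ub ∈ Metric.closedBall ub 1 := Metric.mem_closedBall_self one_pos.le
    have := (convex_closedBall ub 1).norm_image_sub_le_of_norm_deriv_le (f := deriv J)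
      (fun x _ => hdJdiff x) (fun x hx => (hC x (hball hx)).trans (le_max_left C 0))
      h0 hmem
    simp only [add_sub_cancel_left, Real.norm_eq_abs] at this
    calc |deriv J (ub + h) - deriv J ub| ≤ M * |h| := this
      _ ≤ M * εa := by nlinarith [abs_nonneg h]
  -- Step B
  have stepB : ∀ h : ℝ, |h| ≤ εa → |J (ub + h) - J ub - deriv J ub * h| ≤ M * εa * εa := by
    intro h hh
    set φ : ℝ → ℝ := fun s => J (ub + s) - deriv J ub * s with hφ
    have hφd : ∀ s, HasDerivAt φ (deriv J (ub + s) - deriv J ub) s := by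
      intro s
      have h1 : HasDerivAt (fun s => J (ub + s)) (deriv J (ub + s)) s := by
        exact ((hJdiff (ub + s)).hasDerivAt.comp s ((hasDerivAt_id s).const_add ub)).congr_deriv (by ring)
      exact (h1.sub (HasDerivAt.const_mul (deriv J ub) (hasDerivAt_id s))).congr_deriv (by ring)
    have hmem : h ∈ Metric.closedBall (0:ℝ) εa := by
      simpa [Metric.mem_closedBall, Real.dist_eq] using hh
    have h0 : (0:ℝ) ∈ Metric.closedBall (0:ℝ) εa := Metric.mem_closedBall_self hεa0.le
    have := (convex_closedBall (0:ℝ) εa).norm_image_sub_le_of_norm_hasDerivWithin_le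
      (f := φ) (f' := fun s => deriv J (ub + s) - deriv J ub)
      (fun s _ => (hφd s).hasDerivWithinAt)
      (fun s hs => by
        have hsb : |s| ≤ εa := by simpa [Metric.mem_closedBall, Real.dist_eq] using hs
        simpa using stepA s hsb) h0 hmem
    have hφ0 : φ 0 = J ub := by simp [hφ]
    simp only [Real.norm_eq_abs, sub_zero, hφ, add_zero, mul_zero] at this
    calc |J (ub + h) - J ub - deriv J ub * h|
        = |J (ub + h) - deriv J ub * h - J ub| := by ring_nf
      _ ≤ M * εa * |h| := this
      _ ≤ M * εa * εa := by nlinarith [abs_nonneg h, mul_nonneg hM0 hεa0.le]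
  -- the remainder function
  set R : ℝ → ℝ := fun τ => J (ub + εa * Real.sin τ) - J ub - deriv J ub * (εa * Real.sin τ)
    with hR
  set G : ℝ → ℝ := fun τ => -(2/εa) * R τ * Real.sin τ with hG
  have hGc : Continuous G := by
    apply Continuous.mul _ Real.continuous_sin
    apply Continuous.mul continuous_const
    exact ((hJ.continuous.comp (continuous_const.add
      (continuous_const.mul Real.continuous_sin))).sub continuous_const).sub
      (continuous_const.mul (continuous_const.mul Real.continuous_sin))
  have hGi : IntervalIntegrable G volume 0 (2*Real.pi) := hGc.intervalIntegrable _ _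
  have hABi : IntervalIntegrable (fun τ => (-(2/εa) * J ub) * Real.sin τ
      + (-2 * deriv J ub) * Real.sin τ ^ 2) volume 0 (2*Real.pi) := by
    apply Continuous.intervalIntegrable
    continuity
  have hsplit : (∫ τ in (0:ℝ)..(2*Real.pi), -(2/εa) * J (ub + εa * Real.sin τ) * Real.sin τ)
      = (∫ τ in (0:ℝ)..(2*Real.pi), G τ) + (-(2*Real.pi) * deriv J ub) := by
    have h1 : ∀ τ : ℝ, -(2/εa) * J (ub + εa * Real.sin τ) * Real.sin τ
        = G τ + ((-(2/εa) * J ub) * Real.sin τ + (-2 * deriv J ub) * Real.sin τ ^ 2) := by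
      intro τ
      simp only [hG, hR]
      field_simp
      ring
    rw [intervalIntegral.integral_congr (g := fun τ => G τ +
      ((-(2/εa) * J ub) * Real.sin τ + (-2 * deriv J ub) * Real.sin τ ^ 2))
      (fun τ _ => h1 τ)]
    rw [intervalIntegral.integral_add hGi hABi]
    congr 1
    rw [intervalIntegral.integral_add (f := fun x => (-(2/εa) * J ub) * Real.sin x)
      (g := fun x => (-2 * deriv J ub) * Real.sin x ^ 2)
      ((continuous_const.mul Real.continuous_sin).intervalIntegrable _ _)
      ((continuous_const.mul (Real.continuous_sin.pow 2)).intervalIntegrable _ _),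
      intervalIntegral.integral_const_mul, intervalIntegral.integral_const_mul,
      integral_sin, integral_sin_sq]
    simp [Real.cos_two_pi, Real.sin_two_pi]
    ring
  -- bound on ∫ G
  have hGbound : |∫ τ in (0:ℝ)..(2*Real.pi), G τ| ≤ 2*M*εa * (2*Real.pi) := by
    have := intervalIntegral.norm_integral_le_of_norm_le_const (C := 2*M*εa)
      (f := G) (a := (0:ℝ)) (b := 2*Real.pi) (fun τ _ => by
        have hs : |Real.sin τ| ≤ 1 := Real.abs_sin_le_one τ
        have hh : |εa * Real.sin τ| ≤ εa := by
          rw [abs_mul, abs_of_pos hεa0]; nlinarith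
        have hRb : |R τ| ≤ M * εa * εa := stepB _ hh
        simp only [hG, Real.norm_eq_abs, abs_mul, abs_neg, abs_div]
        have h2 : |(2:ℝ)| / |εa| = 2 / εa := by rw [abs_of_pos hεa0]; norm_num
        rw [h2]
        have hd : (0:ℝ) < 2/εa := by positivity
        calc 2/εa * |R τ| * |Real.sin τ| ≤ 2/εa * (M * εa * εa) * 1 := by
              apply mul_le_mul _ hs (abs_nonneg _) (by positivity)
              exact mul_le_mul_of_nonneg_left hRb hd.le
          _ = 2*M*εa := by field_simp)
    simpa [Real.norm_eq_abs, abs_of_pos Real.two_pi_pos] using this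
  have hπ : (2*Real.pi) ≠ 0 := ne_of_gt Real.two_pi_pos
  have key : |fave J ub εa + deriv J ub| ≤ 2*M*εa := by
    have hfe : fave J ub εa + deriv J ub
        = (1/(2*Real.pi)) * ∫ τ in (0:ℝ)..(2*Real.pi), G τ := by
      rw [fave, hsplit]; field_simp; ring
    rw [hfe, abs_mul, abs_of_pos (by positivity : (0:ℝ) < 1/(2*Real.pi))]
    calc 1/(2*Real.pi) * |∫ τ in (0:ℝ)..(2*Real.pi), G τ|
        ≤ 1/(2*Real.pi) * (2*M*εa * (2*Real.pi)) := by
          apply mul_le_mul_of_nonneg_left hGbound (by positivity)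
      _ = 2*M*εa := by field_simp
  have hk : |fave J ub εa + deriv J ub| ≤ (2*M+1) * εa := key.trans (by nlinarith)
  refine ⟨hk, ?_⟩
  obtain ⟨h1, h2⟩ := abs_le.mp hk
  exact ⟨by linarith, by linarith⟩

end HS
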